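/- arXiv:1806.09712 — 6 statements merged into one kernel-verified Lean document; each statement's English description precedes it below -/
import Mathlib

section
/- There exists n₀ ∈ ℕ such that for all real a, b with n₀ < a < b and all x ∈ [0,1], the Beta(a,b) density satisfies f_{a,b}(x) < 8 (a+b)^{3/2} a^{−1/2} b^{−1/2}. -/
open MeasureTheory intervalIntegral

set_option maxHeartbeats 1000000

noncomputable section

/-- The Beta function `B(a,b) = Γ(a)Γ(b)/Γ(a+b)`. -/
def betaFun (a b : ℝ) : ℝ := Real.Gamma a * Real.Gamma b / Real.Gamma (a + b)

/-- The `Beta(a,b)` density `f_{a,b}(x) = x^(a−1) (1−x)^(b−1) / B(a,b)`. -/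
def betaPDF (a b x : ℝ) : ℝ := x ^ (a - 1) * (1 - x) ^ (b - 1) / betaFun a b

/-- `m` is the median of the `Beta(a,b)` distribution: `m ∈ (0,1)` and
`∫_0^m f_{a,b}(x) dx = 1/2`. -/
def IsBetaMedian (a b m : ℝ) : Prop :=
  m ∈ Set.Ioo (0:ℝ) 1 ∧ ∫ x in (0:ℝ)..m, betaPDF a b x = 1/2

lemma betaFun_eq_integral {a b : ℝ} (ha : 0 < a) (hb : 0 < b) :
    betaFun a b = ∫ x in (0:ℝ)..1, x ^ (a - 1) * (1 - x) ^ (b - 1) := by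
  have hG : Complex.Gamma (a : ℂ) * Complex.Gamma (b : ℂ)
      = Complex.Gamma ((a : ℂ) + b) * Complex.betaIntegral a b :=
    Complex.Gamma_mul_Gamma_eq_betaIntegral (by simpa using ha) (by simpa using hb)
  have hI : Complex.betaIntegral a b
      = ((∫ x in (0:ℝ)..1, x ^ (a - 1) * (1 - x) ^ (b - 1) : ℝ) : ℂ) := by
    rw [Complex.betaIntegral, ← intervalIntegral.integral_ofReal]
    refine intervalIntegral.integral_congr fun x hx => ?_
    rw [Set.uIcc_of_le (by norm_num : (0:ℝ) ≤ 1)] at hx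
    symm
    rw [Complex.ofReal_mul, Complex.ofReal_cpow hx.1, Complex.ofReal_cpow (by linarith [hx.2])]
    push_cast
    ring
  have hGab : Real.Gamma (a + b) ≠ 0 := (Real.Gamma_pos_of_pos (by linarith)).ne'
  rw [hI] at hG
  rw [← Complex.ofReal_add, Complex.Gamma_ofReal, Complex.Gamma_ofReal, Complex.Gamma_ofReal,
    ← Complex.ofReal_mul, ← Complex.ofReal_mul] at hG
  have := Complex.ofReal_inj.mp hG
  rw [betaFun, this]
  exact mul_div_cancel_left₀ _ hGab

lemma sq_rpow_half {x : ℝ} (hx : 0 ≤ x) : (x ^ ((1:ℝ)/2)) ^ 2 = x := by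
  rw [← Real.rpow_natCast (x ^ ((1:ℝ)/2)) 2, ← Real.rpow_mul hx]
  norm_num

lemma sq_rpow_threehalf {x : ℝ} (hx : 0 ≤ x) : (x ^ ((3:ℝ)/2)) ^ 2 = x ^ 3 := by
  rw [← Real.rpow_natCast (x ^ ((3:ℝ)/2)) 2, ← Real.rpow_mul hx, ← Real.rpow_natCast x 3]
  norm_num

/-- There exists `n₀ ∈ ℕ` such that for all `n₀ < a < b` and all `x ∈ [0,1]`, the `Beta(a,b)`
density satisfies `f_{a,b}(x) < 8 (a+b)^(3/2) a^(−1/2) b^(−1/2)`. -/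
theorem betaPDF_sup_bound :
    ∃ n₀ : ℕ, ∀ a b : ℝ, (n₀ : ℝ) < a → a < b → ∀ x ∈ Set.Icc (0:ℝ) 1,
      betaPDF a b x <
        8 * (a + b) ^ ((3:ℝ)/2) * a ^ (-(1/2) : ℝ) * b ^ (-(1/2) : ℝ) := by
  use 2
  intro a b ha hab x hx
  set s := a + b with hs_def
  clear_value s
  have ha2 : (2:ℝ) < a := by exact_mod_cast ha
  have hb2 : (2:ℝ) < b := lt_trans ha2 hab
  have hs4 : (4:ℝ) < s := by rw [hs_def]; linarith
  have ha0 : (0:ℝ) < a := by linarith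
  have hb0 : (0:ℝ) < b := by linarith
  have hs0 : (0:ℝ) < s := by linarith
  have hbs : b < s := by rw [hs_def]; linarith
  have has : a < s := by rw [hs_def]; linarith
  have hs2 : (0:ℝ) < s - 2 := by linarith
  set m := (a - 1) / (s - 2) with hm_def
  clear_value m
  have hm0 : 0 < m := by rw [hm_def]; exact div_pos (by linarith) hs2
  have hmhalf : m < 1/2 := by
    rw [hm_def, div_lt_iff₀ hs2]; rw [hs_def]; linarith
  have key_a : a - 1 = m * (s - 2) := by
    rw [hm_def]; field_simp
  have key_b : b - 1 = (1 - m) * (s - 2) := by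
    rw [hm_def]; field_simp; rw [hs_def]; ring
  set δ := a ^ ((1:ℝ)/2) * b ^ ((1:ℝ)/2) / (4 * s ^ ((3:ℝ)/2)) with hδ_def
  clear_value δ
  have hra : 0 < a ^ ((1:ℝ)/2) := Real.rpow_pos_of_pos ha0 _
  have hrb : 0 < b ^ ((1:ℝ)/2) := Real.rpow_pos_of_pos hb0 _
  have hrs : 0 < s ^ ((3:ℝ)/2) := Real.rpow_pos_of_pos hs0 _
  have hδ0 : 0 < δ := by rw [hδ_def]; positivity
  have hδsq : δ ^ 2 = a * b / (16 * s ^ 3) := by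
    rw [hδ_def, div_pow, mul_pow, mul_pow, sq_rpow_half ha0.le, sq_rpow_half hb0.le,
      sq_rpow_threehalf hs0.le]
    norm_num
  have hδ18 : δ ≤ 1/8 := by
    refine le_of_pow_le_pow_left₀ two_ne_zero (by norm_num) ?_
    rw [hδsq]
    rw [div_le_iff₀ (by positivity)]
    nlinarith [mul_lt_mul_of_pos_right has hb0, mul_lt_mul_of_pos_right hbs hs0,
      mul_nonneg (mul_nonneg hs0.le hs0.le) (show (0:ℝ) ≤ s - 4 by linarith)]
  have hm_lb : a / (2 * s) ≤ m := by
    rw [hm_def, div_le_div_iff₀ (by linarith) hs2]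
    nlinarith
  set g : ℝ → ℝ := fun y => y ^ (a - 1) * (1 - y) ^ (b - 1) with hg_def
  clear_value g
  set gm := g m with hgm_def
  clear_value gm
  have hgm0 : 0 < gm := by
    rw [hgm_def, hg_def]
    exact mul_pos (Real.rpow_pos_of_pos hm0 _) (Real.rpow_pos_of_pos (by linarith) _)
  have hgexp : ∀ y : ℝ, 0 < y → y < 1 →
      g y = Real.exp ((a-1) * Real.log y + (b-1) * Real.log (1-y)) := by
    intro y h0 h1
    rw [hg_def]
    simp only
    rw [Real.rpow_def_of_pos h0, Real.rpow_def_of_pos (by linarith), ← Real.exp_add]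
    ring_nf
  have hgm_exp : gm = Real.exp ((a-1) * Real.log m + (b-1) * Real.log (1-m)) := by
    rw [hgm_def]; exact hgexp m hm0 (by linarith)
  -- upper bound
  have hupper : ∀ y ∈ Set.Icc (0:ℝ) 1, g y ≤ gm := by
    rintro y ⟨hy0, hy1⟩
    rcases eq_or_lt_of_le hy0 with h0 | h0
    · have : g y = 0 := by
        rw [← h0, hg_def]; simp [Real.zero_rpow (show a - 1 ≠ 0 by linarith)]
      rw [this]; exact hgm0.le
    rcases eq_or_lt_of_le hy1 with h1 | h1
    · have : g y = 0 := by
        rw [h1, hg_def]; simp [Real.zero_rpow (show b - 1 ≠ 0 by linarith)]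
      rw [this]; exact hgm0.le
    rw [hgexp y h0 h1, hgm_exp, Real.exp_le_exp]
    have hlog1 : Real.log y - Real.log m ≤ y / m - 1 := by
      have h := Real.log_le_sub_one_of_pos (div_pos h0 hm0)
      rwa [Real.log_div h0.ne' hm0.ne'] at h
    have hlog2 : Real.log (1-y) - Real.log (1-m) ≤ (1-y) / (1-m) - 1 := by
      have h := Real.log_le_sub_one_of_pos
        (div_pos (show (0:ℝ) < 1 - y by linarith) (show (0:ℝ) < 1 - m by linarith))
      rwa [Real.log_div (show (1:ℝ) - y ≠ 0 by linarith) (show (1:ℝ) - m ≠ 0 by linarith)] at h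
    have e1 : (a-1) * (y / m - 1) = (s-2) * (y - m) := by
      rw [key_a]; field_simp
    have e2 : (b-1) * ((1-y) / (1-m) - 1) = (s-2) * (m - y) := by
      rw [key_b]; field_simp [show (1:ℝ) - m ≠ 0 by linarith]
      ring
    have h1' : (a-1) * (Real.log y - Real.log m) ≤ (s-2) * (y - m) := by
      rw [← e1]; exact mul_le_mul_of_nonneg_left hlog1 (by linarith)
    have h2' : (b-1) * (Real.log (1-y) - Real.log (1-m)) ≤ (s-2) * (m - y) := by
      rw [← e2]; exact mul_le_mul_of_nonneg_left hlog2 (by linarith)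
    linarith [h1', h2']
  -- lower bound on [m, m+δ]
  have hlower : ∀ y ∈ Set.Icc m (m + δ), gm * Real.exp (-(1/2 : ℝ)) ≤ g y := by
    rintro y ⟨hy_lb, hy_ub⟩
    have hy0 : 0 < y := lt_of_lt_of_le hm0 hy_lb
    have hy58 : y ≤ 5/8 := by linarith
    have hy1 : y < 1 := by linarith
    rw [hgexp y hy0 hy1, hgm_exp, ← Real.exp_add, Real.exp_le_exp]
    have hlog1 : Real.log m - Real.log y ≤ m / y - 1 := by
      have h := Real.log_le_sub_one_of_pos (div_pos hm0 hy0)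
      rwa [Real.log_div hm0.ne' hy0.ne'] at h
    have hlog2 : Real.log (1-m) - Real.log (1-y) ≤ (1-m) / (1-y) - 1 := by
      have h := Real.log_le_sub_one_of_pos
        (div_pos (by linarith : (0:ℝ) < 1 - m) (by linarith : (0:ℝ) < 1 - y))
      rwa [Real.log_div (by linarith : (1:ℝ) - m ≠ 0) (by linarith : (1:ℝ) - y ≠ 0)] at h
    have heq : (a-1) * (m / y - 1) + (b-1) * ((1-m) / (1-y) - 1)
        = (s-2) * (y - m)^2 / (y * (1-y)) := by
      rw [key_a, key_b]
      field_simp [hy0.ne', (show (1:ℝ) - y ≠ 0 by linarith), hm0.ne']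
      ring
    have hquad : (s-2) * (y - m)^2 / (y * (1-y)) ≤ 1/2 := by
      rw [div_le_iff₀ (mul_pos hy0 (show (0:ℝ) < 1 - y by linarith))]
      have e1 : (y - m)^2 ≤ δ^2 := by
        nlinarith [mul_nonneg (show (0:ℝ) ≤ δ - (y - m) by linarith)
          (show (0:ℝ) ≤ δ + (y - m) by linarith)]
      have e3 : (s-2) * (y - m)^2 ≤ s * δ^2 := by nlinarith [sq_nonneg (y - m)]
      have e4 : s * δ^2 = a * b / (16 * s^2) := by
        rw [hδsq]; field_simp
      have e5 : a * b / (16 * s^2) ≤ a / (16 * s) := by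
        rw [div_le_div_iff₀ (by positivity) (by positivity)]
        nlinarith [mul_pos (mul_pos ha0 hs0) (show (0:ℝ) < s - b by linarith)]
      have e2 : a / (2 * s) ≤ y := le_trans hm_lb hy_lb
      have e2' : a ≤ y * (2 * s) := by rwa [div_le_iff₀ (by positivity)] at e2
      have e6 : a / (16 * s) ≤ y / 8 := by
        rw [div_le_div_iff₀ (by positivity) (by norm_num : (0:ℝ) < 8)]
        nlinarith
      have e7 : y / 8 ≤ 1/2 * (y * (1-y)) := by
        nlinarith [mul_nonneg hy0.le (by linarith : (0:ℝ) ≤ 3/8 - y/2)]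
      linarith
    have h1' : (a-1) * (Real.log m - Real.log y) ≤ (a-1) * (m / y - 1) :=
      mul_le_mul_of_nonneg_left hlog1 (by linarith)
    have h2' : (b-1) * (Real.log (1-m) - Real.log (1-y)) ≤ (b-1) * ((1-m) / (1-y) - 1) :=
      mul_le_mul_of_nonneg_left hlog2 (by linarith)
    linarith [h1', h2', heq, hquad]
  -- continuity and integrability
  have hg_cont : Continuous g := by
    rw [hg_def]
    exact (Real.continuous_rpow_const (by linarith : (0:ℝ) ≤ a - 1)).mul
      ((Real.continuous_rpow_const (by linarith : (0:ℝ) ≤ b - 1)).comp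
        (continuous_const.sub continuous_id))
  have hInt : ∀ u v : ℝ, IntervalIntegrable g volume u v := fun u v =>
    hg_cont.intervalIntegrable u v
  have hg_nonneg : ∀ y ∈ Set.Icc (0:ℝ) 1, 0 ≤ g y := by
    rintro y ⟨hy0, hy1⟩
    rw [hg_def]
    exact mul_nonneg (Real.rpow_nonneg hy0 _) (Real.rpow_nonneg (by linarith) _)
  have hmδ1 : m + δ ≤ 1 := by linarith
  have hsplit1 : (∫ y in (0:ℝ)..m, g y) + (∫ y in m..(m+δ), g y) = ∫ y in (0:ℝ)..(m+δ), g y :=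
    intervalIntegral.integral_add_adjacent_intervals (hInt 0 m) (hInt m (m+δ))
  have hsplit2 : (∫ y in (0:ℝ)..(m+δ), g y) + (∫ y in (m+δ)..1, g y) = ∫ y in (0:ℝ)..1, g y :=
    intervalIntegral.integral_add_adjacent_intervals (hInt 0 (m+δ)) (hInt (m+δ) 1)
  have hnn1 : 0 ≤ ∫ y in (0:ℝ)..m, g y := by
    refine intervalIntegral.integral_nonneg (by linarith) fun y hy => ?_
    exact hg_nonneg y ⟨hy.1, by linarith [hy.2]⟩
  have hnn2 : 0 ≤ ∫ y in (m+δ)..1, g y := by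
    refine intervalIntegral.integral_nonneg hmδ1 fun y hy => ?_
    exact hg_nonneg y ⟨by linarith [hy.1], hy.2⟩
  have hmono : δ * (gm * Real.exp (-(1/2 : ℝ))) ≤ ∫ y in m..(m+δ), g y := by
    have h := intervalIntegral.integral_mono_on (by linarith : m ≤ m + δ)
      (intervalIntegrable_const) (hInt m (m+δ)) hlower
    rwa [intervalIntegral.integral_const, smul_eq_mul, show m + δ - m = δ by ring] at h
  have hBeq : betaFun a b = ∫ y in (0:ℝ)..1, g y := by
    rw [betaFun_eq_integral ha0 hb0, hg_def]
  have hBge : δ * (gm * Real.exp (-(1/2 : ℝ))) ≤ betaFun a b := by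
    rw [hBeq]; linarith
  -- exp(-1/2) > 1/2
  have hexpsq : Real.exp (1/2 : ℝ) ^ 2 = Real.exp 1 := by
    rw [sq, ← Real.exp_add]; norm_num
  have hexp2 : Real.exp (1/2 : ℝ) < 2 := by
    nlinarith [Real.exp_pos (1/2 : ℝ), Real.exp_one_lt_d9]
  have hexp_half : (1:ℝ)/2 < Real.exp (-(1/2 : ℝ)) := by
    rw [Real.exp_neg]
    have h4 : (2:ℝ)⁻¹ < (Real.exp (1/2 : ℝ))⁻¹ := inv_strictAnti₀ (Real.exp_pos _) hexp2
    linarith [h4]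
  have hB2 : δ * gm / 2 < betaFun a b := by
    have h := mul_lt_mul_of_pos_left hexp_half (mul_pos hδ0 hgm0)
    linarith [hBge, h]
  have hB0 : 0 < betaFun a b :=
    lt_trans (div_pos (mul_pos hδ0 hgm0) two_pos) hB2
  have hPDF : betaPDF a b x = g x / betaFun a b := by
    rw [betaPDF, hg_def]
  have hRHS : 8 * s ^ ((3:ℝ)/2) * a ^ (-(1/2) : ℝ) * b ^ (-(1/2) : ℝ) = 2 / δ := by
    rw [hδ_def, Real.rpow_neg ha0.le, Real.rpow_neg hb0.le]
    field_simp
    ring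
  rw [hPDF, hRHS, div_lt_div_iff₀ hB0 hδ0]
  have hgx : g x ≤ gm := hupper x hx
  have h := mul_le_mul_of_nonneg_right hgx hδ0.le
  linarith
end
end

section
/- Let n ≥ 2 be an integer, 0 < ε < 1 and x > 0. If Z has the Beta(1,n) distribution, i.e. density z ↦ n(1−z)^{n−1} on [0,1], then P(|Z/x − 1| > ε) ≥ 1 − 2ε/(1−ε); equivalently, ∫_0^1 1{|z/x − 1| > ε} · n(1−z)^{n−1} dz ≥ 1 − 2ε/(1−ε). -/
open MeasureTheory

lemma bernoulli_pow_aux (m : ℕ) (t : ℝ) (h0 : 0 ≤ t) (h1 : t ≤ 1) :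
    (1 - t) ^ m * (1 + (m : ℝ) * t) ≤ 1 := by
  induction m with
  | zero => simp
  | succ m ih =>
    have hp : (0:ℝ) ≤ (1 - t) ^ m := pow_nonneg (by linarith) m
    have key : (1 - t) * (1 + ((m : ℝ) + 1) * t) ≤ 1 + (m : ℝ) * t := by
      have hm : (0:ℝ) ≤ (m:ℝ) := Nat.cast_nonneg m
      nlinarith [mul_nonneg h0 h0, mul_nonneg hm (mul_nonneg h0 h0)]
    have : (1 - t) ^ (m + 1) * (1 + ((m : ℝ) + 1) * t)
        = (1 - t) ^ m * ((1 - t) * (1 + ((m : ℝ) + 1) * t)) := by ring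
    push_cast
    rw [this]
    calc (1 - t) ^ m * ((1 - t) * (1 + ((m : ℝ) + 1) * t))
        ≤ (1 - t) ^ m * (1 + (m : ℝ) * t) := mul_le_mul_of_nonneg_left key hp
      _ ≤ 1 := ih

lemma nt_pow_le_one (n : ℕ) (hn : 1 ≤ n) (t : ℝ) (h0 : 0 ≤ t) (h1 : t ≤ 1) :
    (n : ℝ) * t * (1 - t) ^ (n - 1) ≤ 1 := by
  have hc : ((n - 1 : ℕ) : ℝ) = (n : ℝ) - 1 := by
    have : (1:ℕ) ≤ n := hn
    push_cast [Nat.cast_sub this]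
    ring
  have hb := bernoulli_pow_aux (n - 1) t h0 h1
  rw [hc] at hb
  have hp : (0:ℝ) ≤ (1 - t) ^ (n - 1) := pow_nonneg (by linarith) _
  have hle : (n : ℝ) * t ≤ 1 + ((n : ℝ) - 1) * t := by nlinarith
  calc (n : ℝ) * t * (1 - t) ^ (n - 1)
      ≤ (1 + ((n : ℝ) - 1) * t) * (1 - t) ^ (n - 1) :=
        mul_le_mul_of_nonneg_right hle hp
    _ ≤ 1 := by rw [mul_comm]; exact hb

/-- If `Z ∼ Beta(1,n)` (density `z ↦ n(1−z)^(n−1)` on `[0,1]`), `n ≥ 2`, `0 < ε < 1` and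
`x > 0`, then `P(|Z/x − 1| > ε) ≥ 1 − 2ε/(1−ε)`. -/
theorem beta_one_n_loss_lower_bound (n : ℕ) (hn : 2 ≤ n) (ε x : ℝ)
    (hε0 : 0 < ε) (hε1 : ε < 1) (hx : 0 < x) :
    1 - 2 * ε / (1 - ε) ≤
      ∫ z in (0:ℝ)..1,
        Set.indicator {z : ℝ | ε < |z / x - 1|} (fun z => (n:ℝ) * (1 - z) ^ (n - 1)) z := by
  have hn1 : 1 ≤ n := le_trans one_le_two hn
  set f : ℝ → ℝ := fun z => (n:ℝ) * (1 - z) ^ (n - 1) with hfdef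
  set S : Set ℝ := {z : ℝ | ε < |z / x - 1|} with hSdef
  have hSm : MeasurableSet S :=
    measurableSet_lt measurable_const (((measurable_id.div_const x).sub_const 1).abs)
  have hfc : Continuous f := by fun_prop
  have hfint : IntervalIntegrable f volume 0 1 := hfc.intervalIntegrable 0 1
  have hind_int : IntervalIntegrable (fun z => S.indicator f z) volume 0 1 := by
    rw [intervalIntegrable_iff_integrableOn_Ioc_of_le zero_le_one] at hfint ⊢
    exact hfint.indicator hSm
  have hεnn : 0 < 1 - ε := by linarith
  have hratio : 0 ≤ 2 * ε / (1 - ε) := by positivity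
  -- total mass is 1
  have htot : ∫ z in (0:ℝ)..1, f z = 1 := by
    have h1 : ∫ z in (0:ℝ)..1, (1 - z) ^ (n - 1) = 1 / n := by
      have hcomp := intervalIntegral.integral_comp_sub_left (a := (0:ℝ)) (b := 1)
        (fun u : ℝ => u ^ (n - 1)) 1
      simp only [sub_zero, sub_self] at hcomp
      rw [hcomp, integral_pow, Nat.sub_add_cancel hn1, zero_pow (by omega : n ≠ 0),
        Nat.cast_sub hn1]
      push_cast
      have hne : (n : ℝ) ≠ 0 := by positivity
      field_simp
      simp [hne]
    have hne : (n : ℝ) ≠ 0 := by positivity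
    rw [hfdef]
    simp only [intervalIntegral.integral_const_mul, h1]
    field_simp
  set a : ℝ := x * (1 - ε) with hadef
  set b : ℝ := x * (1 + ε) with hbdef
  by_cases ha : 1 < a
  · -- the whole interval is in the event
    have heq : Set.EqOn (fun z => S.indicator f z) f (Set.uIcc 0 1) := by
      intro z hz
      rw [Set.uIcc_of_le zero_le_one] at hz
      have hz1 : z ≤ 1 := hz.2
      have hmem : z ∈ S := by
        simp only [hSdef, Set.mem_setOf_eq]
        rw [abs_sub_comm]
        calc ε < -(z / x - 1) := by
              have : z / x < 1 - ε := by rw [div_lt_iff₀ hx]; nlinarith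
              linarith
          _ ≤ |1 - z / x| := by rw [neg_sub]; exact le_abs_self _
      simp [Set.indicator_of_mem hmem]
    rw [intervalIntegral.integral_congr heq, htot]
    linarith
  · push_neg at ha
    have ha0 : 0 ≤ a := by positivity
    have hab : a ≤ b := by nlinarith
    set c : ℝ := (n : ℝ) * (1 - a) ^ (n - 1) with hcdef
    have hc0 : 0 ≤ c := by
      have : (0:ℝ) ≤ 1 - a := by linarith
      positivity
    set g : ℝ → ℝ := fun z => f z - Set.indicator (Set.Icc a b) (fun _ => c) z with hgdef
    have hci : IntervalIntegrable (fun z => Set.indicator (Set.Icc a b) (fun _ => c) z)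
        volume 0 1 := by
      rw [intervalIntegrable_iff_integrableOn_Ioc_of_le zero_le_one]
      exact (integrableOn_const measure_Ioc_lt_top.ne enorm_ne_top).indicator measurableSet_Icc
    have hgint : IntervalIntegrable g volume 0 1 := hfint.sub hci
    -- pointwise bound on [0,1]
    have h_pt : ∀ z ∈ Set.Icc (0:ℝ) 1, g z ≤ S.indicator f z := by
      intro z hz
      by_cases hmem : z ∈ S
      · have hind_nn : 0 ≤ Set.indicator (Set.Icc a b) (fun _ => c) z :=
          Set.indicator_nonneg (fun _ _ => hc0) z
        rw [Set.indicator_of_mem hmem]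
        simp only [hgdef]
        linarith
      · have habs : |z / x - 1| ≤ ε := by
          simpa [hSdef, Set.mem_setOf_eq, not_lt] using hmem
        obtain ⟨hl, hr⟩ := abs_le.1 habs
        have hza : a ≤ z := by
          have h1 : 1 - ε ≤ z / x := by linarith
          have := (le_div_iff₀ hx).1 h1
          linarith [this]
        have hzb : z ≤ b := by
          have h1 : z / x ≤ 1 + ε := by linarith
          have := (div_le_iff₀ hx).1 h1
          linarith [this]
        have hzIcc : z ∈ Set.Icc a b := ⟨hza, hzb⟩
        rw [Set.indicator_of_notMem hmem, hgdef]
        simp only [Set.indicator_of_mem hzIcc]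
        have hfz : f z ≤ c := by
          have h1z : (0:ℝ) ≤ 1 - z := by linarith [hz.2]
          have h2 : 1 - z ≤ 1 - a := by linarith
          have := pow_le_pow_left₀ h1z h2 (n - 1)
          simp only [hfdef, hcdef]
          have hn0 : (0:ℝ) ≤ (n:ℝ) := by positivity
          exact mul_le_mul_of_nonneg_left this hn0
        linarith
    have hmono : ∫ z in (0:ℝ)..1, g z ≤ ∫ z in (0:ℝ)..1, S.indicator f z :=
      intervalIntegral.integral_mono_on zero_le_one hgint hind_int h_pt
    -- compute/bound ∫ g
    have hind_val : ∫ z in (0:ℝ)..1, Set.indicator (Set.Icc a b) (fun _ => c) z ≤ c * (b - a) := by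
      rw [intervalIntegral.integral_of_le zero_le_one,
        MeasureTheory.integral_indicator measurableSet_Icc]
      rw [MeasureTheory.setIntegral_const]
      have hmeas : (volume.restrict (Set.Ioc (0:ℝ) 1)) (Set.Icc a b) ≤ volume (Set.Icc a b) := by
        rw [MeasureTheory.Measure.restrict_apply measurableSet_Icc]
        exact measure_mono Set.inter_subset_left
      have hfin : (volume.restrict (Set.Ioc (0:ℝ) 1)) (Set.Icc a b) ≠ ⊤ := by
        refine ne_top_of_le_ne_top ?_ hmeas
        rw [Real.volume_Icc]; exact ENNReal.ofReal_ne_top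
      have htr : ((volume.restrict (Set.Ioc (0:ℝ) 1)) (Set.Icc a b)).toReal ≤ b - a := by
        have : (volume (Set.Icc a b)).toReal = b - a := by
          rw [Real.volume_Icc, ENNReal.toReal_ofReal (by linarith)]
        rw [← this]
        exact ENNReal.toReal_mono (by rw [Real.volume_Icc]; exact ENNReal.ofReal_ne_top) hmeas
      rw [smul_eq_mul, mul_comm]
      exact mul_le_mul_of_nonneg_left htr hc0
    have hsplit : ∫ z in (0:ℝ)..1, g z
        = (∫ z in (0:ℝ)..1, f z) - ∫ z in (0:ℝ)..1, Set.indicator (Set.Icc a b) (fun _ => c) z := by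
      rw [hgdef]
      exact intervalIntegral.integral_sub hfint hci
    -- key numeric inequality
    have hkey : c * (b - a) ≤ 2 * ε / (1 - ε) := by
      have hba : b - a = 2 * ε * x := by rw [hadef, hbdef]; ring
      have hnt := nt_pow_le_one n hn1 a ha0 ha
      -- c * (2εx) = (2ε/(1-ε)) * (n * a * (1-a)^(n-1))
      have hx' : x = a / (1 - ε) := by rw [hadef]; field_simp
      rw [hba, hcdef, hx']
      rw [le_div_iff₀ hεnn]
      calc (n:ℝ) * (1 - a) ^ (n - 1) * (2 * ε * (a / (1 - ε))) * (1 - ε)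
          = 2 * ε * ((n:ℝ) * a * (1 - a) ^ (n - 1)) := by field_simp
        _ ≤ 2 * ε * 1 := by nlinarith
        _ = 2 * ε := by ring
    calc 1 - 2 * ε / (1 - ε)
        ≤ 1 - c * (b - a) := by linarith
      _ ≤ ∫ z in (0:ℝ)..1, g z := by rw [hsplit, htot]; linarith
      _ ≤ _ := hmono
end

section
/- Let a > 1 and b > 0, and let m₁ = m_{a−1,b} be the median of Beta(a−1,b) and m₂ = m_{a,b} the median of Beta(a,b). Then (B(a−1,b)/B(a,b)) · ∫_0^1 |x − m₁| f_{a−1,b}(x) dx = 2 ∫_{m₁}^{m₂} f_{a,b}(x) dx; that is, the Bayes-normalized mean absolute deviation of Beta(a−1,b) about its median equals twice the Beta(a,b) mass between the two medians. -/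
open MeasureTheory intervalIntegral

noncomputable section

lemma ofReal_eq (u v : ℝ) (x : ℝ) (hx : 0 ≤ x) (hx1 : x ≤ 1) :
    ((x ^ (u - 1) * (1 - x) ^ (v - 1) : ℝ) : ℂ)
      = (x : ℂ) ^ ((u : ℂ) - 1) * (1 - (x : ℂ)) ^ ((v : ℂ) - 1) := by
  rw [Complex.ofReal_mul, Complex.ofReal_cpow hx, Complex.ofReal_cpow (by linarith : (0:ℝ) ≤ 1 - x)]
  push_cast
  ring_nf

lemma beta_intervalIntegrable {u v : ℝ} (hu : 0 < u) (hv : 0 < v) :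
    IntervalIntegrable (fun x : ℝ => x ^ (u - 1) * (1 - x) ^ (v - 1)) volume 0 1 := by
  have h := Complex.betaIntegral_convergent (u := (u : ℂ)) (v := (v : ℂ))
    (by simpa using hu) (by simpa using hv)
  rw [intervalIntegrable_iff] at h ⊢
  have : Set.uIoc (0:ℝ) 1 = Set.Ioc 0 1 := by simp [Set.uIoc_of_le]
  rw [this] at h ⊢
  have h2 : IntegrableOn (fun x : ℝ => ((x ^ (u - 1) * (1 - x) ^ (v - 1) : ℝ) : ℂ))
      (Set.Ioc 0 1) volume := by
    apply h.congr_fun _ measurableSet_Ioc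
    intro x hx
    exact (ofReal_eq u v x hx.1.le hx.2).symm
  have h3 := h2.re
  simp at h3
  exact h3

lemma beta_integral_value {u v : ℝ} (hu : 0 < u) (hv : 0 < v) :
    ∫ x in (0:ℝ)..1, x ^ (u - 1) * (1 - x) ^ (v - 1) = betaFun u v := by
  have h := Complex.Gamma_mul_Gamma_eq_betaIntegral (s := (u : ℂ)) (t := (v : ℂ))
    (by simpa using hu) (by simpa using hv)
  have hne : Complex.Gamma ((u : ℂ) + v) ≠ 0 :=
    Complex.Gamma_ne_zero_of_re_pos (by simp [hu, hv]; positivity)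
  have hβ : Complex.betaIntegral u v =
      ((∫ x in (0:ℝ)..1, x ^ (u - 1) * (1 - x) ^ (v - 1) : ℝ) : ℂ) := by
    rw [Complex.betaIntegral, ← intervalIntegral.integral_ofReal]
    apply intervalIntegral.integral_congr
    intro x hx
    rw [Set.uIcc_of_le (by norm_num : (0:ℝ) ≤ 1)] at hx
    exact (ofReal_eq u v x hx.1 hx.2).symm
  rw [hβ] at h
  have : ((betaFun u v : ℝ) : ℂ) = ((∫ x in (0:ℝ)..1, x ^ (u-1) * (1-x) ^ (v-1) : ℝ) : ℂ) := by
    rw [betaFun]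
    push_cast
    rw [← Complex.Gamma_ofReal, ← Complex.Gamma_ofReal, ← Complex.Gamma_ofReal]
    push_cast
    field_simp
    linear_combination h
  exact_mod_cast this.symm

lemma betaFun_pos {u v : ℝ} (hu : 0 < u) (hv : 0 < v) : 0 < betaFun u v := by
  unfold betaFun
  have := Real.Gamma_pos_of_pos hu
  have := Real.Gamma_pos_of_pos hv
  have := Real.Gamma_pos_of_pos (by linarith : (0:ℝ) < u + v)
  positivity

lemma betaPDF_intervalIntegrable {u v : ℝ} (hu : 0 < u) (hv : 0 < v) :
    IntervalIntegrable (betaPDF u v) volume 0 1 := by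
  have := (beta_intervalIntegrable hu hv).div_const (betaFun u v)
  exact this

lemma betaPDF_integral_one {u v : ℝ} (hu : 0 < u) (hv : 0 < v) :
    ∫ x in (0:ℝ)..1, betaPDF u v x = 1 := by
  have hB := betaFun_pos hu hv
  simp only [betaPDF]
  rw [intervalIntegral.integral_div, beta_integral_value hu hv, div_self hB.ne']

lemma key_pointwise {a b : ℝ} (ha : 1 < a) (hb : 0 < b) {x : ℝ} (hx : 0 ≤ x) :
    x * betaPDF (a - 1) b x = betaFun a b / betaFun (a - 1) b * betaPDF a b x := by
  have hB1 := betaFun_pos (by linarith : (0:ℝ) < a - 1) hb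
  have hB2 := betaFun_pos (by linarith : (0:ℝ) < a) hb
  rcases hx.eq_or_lt with h0 | h0
  · rw [← h0, zero_mul, betaPDF, Real.zero_rpow (by linarith : a - 1 ≠ 0)]
    simp
  · have hpow : x ^ (a - 1 - 1) * x = x ^ (a - 1) := by
      rw [show x ^ (a-1-1) * x = x ^ (a-1-1) * x ^ (1:ℝ) by rw [Real.rpow_one],
        ← Real.rpow_add h0]
      ring_nf
    have e1 : x * (x ^ (a-1-1) * (1-x) ^ (b-1) / betaFun (a-1) b)
        = x ^ (a-1) * (1-x) ^ (b-1) / betaFun (a-1) b := by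
      rw [← hpow]; ring
    rw [betaPDF, betaPDF, e1]
    field_simp

/-- For `a > 1`, `b > 0`, with `m₁` the median of `Beta(a−1,b)` and `m₂` the median of
`Beta(a,b)`, the Bayes-normalized mean absolute deviation of `Beta(a−1,b)` about its median
equals twice the `Beta(a,b)` mass between the two medians:
`(B(a−1,b)/B(a,b)) ∫_0^1 |x − m₁| f_{a−1,b}(x) dx = 2 ∫_{m₁}^{m₂} f_{a,b}(x) dx`. -/
theorem beta_mad_eq_twice_mass_between_medians (a b m₁ m₂ : ℝ) (ha : 1 < a) (hb : 0 < b)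
    (h₁ : IsBetaMedian (a - 1) b m₁) (h₂ : IsBetaMedian a b m₂) :
    betaFun (a - 1) b / betaFun a b * ∫ x in (0:ℝ)..1, |x - m₁| * betaPDF (a - 1) b x =
      2 * ∫ x in m₁..m₂, betaPDF a b x := by
  obtain ⟨⟨hm10, hm11⟩, hmed1⟩ := h₁
  obtain ⟨⟨hm20, hm21⟩, hmed2⟩ := h₂
  have ha1 : (0:ℝ) < a - 1 := by linarith
  have ha0 : (0:ℝ) < a := by linarith
  have hB1 := betaFun_pos ha1 hb
  have hB2 := betaFun_pos ha0 hb
  set f := betaPDF (a-1) b with hf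
  set g := betaPDF a b with hg
  have If : IntervalIntegrable f volume 0 1 := betaPDF_intervalIntegrable ha1 hb
  have Ig : IntervalIntegrable g volume 0 1 := betaPDF_intervalIntegrable ha0 hb
  have sub1 : Set.uIcc (0:ℝ) m₁ ⊆ Set.uIcc (0:ℝ) 1 := by
    rw [Set.uIcc_of_le hm10.le, Set.uIcc_of_le zero_le_one]
    exact Set.Icc_subset_Icc le_rfl hm11.le
  have sub2 : Set.uIcc m₁ (1:ℝ) ⊆ Set.uIcc (0:ℝ) 1 := by
    rw [Set.uIcc_of_le hm11.le, Set.uIcc_of_le zero_le_one]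
    exact Set.Icc_subset_Icc hm10.le le_rfl
  have sub3 : Set.uIcc (0:ℝ) m₂ ⊆ Set.uIcc (0:ℝ) 1 := by
    rw [Set.uIcc_of_le hm20.le, Set.uIcc_of_le zero_le_one]
    exact Set.Icc_subset_Icc le_rfl hm21.le
  have If1 : IntervalIntegrable f volume 0 m₁ := If.mono_set sub1
  have If2 : IntervalIntegrable f volume m₁ 1 := If.mono_set sub2
  have Ig1 : IntervalIntegrable g volume 0 m₁ := Ig.mono_set sub1
  have Ig2 : IntervalIntegrable g volume m₁ 1 := Ig.mono_set sub2
  have Ig3 : IntervalIntegrable g volume 0 m₂ := Ig.mono_set sub3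
  have hgtot : ∫ x in (0:ℝ)..1, g x = 1 := betaPDF_integral_one ha0 hb
  have hftot : ∫ x in (0:ℝ)..1, f x = 1 := betaPDF_integral_one ha1 hb
  have hQ : ∫ x in m₁..(1:ℝ), g x = 1 - ∫ x in (0:ℝ)..m₁, g x := by
    have := intervalIntegral.integral_add_adjacent_intervals Ig1 Ig2
    rw [hgtot] at this; linarith
  have hFtail : ∫ x in m₁..(1:ℝ), f x = 1/2 := by
    have := intervalIntegral.integral_add_adjacent_intervals If1 If2
    rw [hftot] at this; rw [hmed1] at this; linarith
  have hRHS : ∫ x in m₁..m₂, g x = 1/2 - ∫ x in (0:ℝ)..m₁, g x := by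
    have := intervalIntegral.integral_interval_sub_left Ig3 Ig1
    rw [hmed2] at this; linarith
  have hxf : ∀ c d : ℝ, 0 ≤ c → 0 ≤ d →
      ∫ x in c..d, x * f x = betaFun a b / betaFun (a-1) b * ∫ x in c..d, g x := by
    intro c d hc hd
    rw [← intervalIntegral.integral_const_mul]
    apply intervalIntegral.integral_congr
    intro x hx
    have hx0 : 0 ≤ x := le_trans (le_inf hc hd) hx.1
    exact key_pointwise ha hb hx0
  have int2 : IntervalIntegrable (fun x => x * f x) volume 0 m₁ :=
    If1.continuousOn_mul continuous_id.continuousOn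
  have int2' : IntervalIntegrable (fun x => x * f x) volume m₁ 1 :=
    If2.continuousOn_mul continuous_id.continuousOn
  have habs1 : ∫ x in (0:ℝ)..m₁, |x - m₁| * f x
      = m₁ * (∫ x in (0:ℝ)..m₁, f x) - ∫ x in (0:ℝ)..m₁, x * f x := by
    rw [← intervalIntegral.integral_const_mul,
      ← intervalIntegral.integral_sub (If1.const_mul m₁) int2]
    apply intervalIntegral.integral_congr
    intro x hx
    rw [Set.uIcc_of_le hm10.le] at hx
    show |x - m₁| * f x = m₁ * f x - x * f x
    rw [abs_of_nonpos (by linarith [hx.2] : x - m₁ ≤ 0)]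
    ring
  have habs2 : ∫ x in m₁..(1:ℝ), |x - m₁| * f x
      = (∫ x in m₁..(1:ℝ), x * f x) - m₁ * ∫ x in m₁..(1:ℝ), f x := by
    rw [← intervalIntegral.integral_const_mul,
      ← intervalIntegral.integral_sub int2' (If2.const_mul m₁)]
    apply intervalIntegral.integral_congr
    intro x hx
    rw [Set.uIcc_of_le hm11.le] at hx
    show |x - m₁| * f x = x * f x - m₁ * f x
    rw [abs_of_nonneg (by linarith [hx.1] : 0 ≤ x - m₁)]
    ring
  have Iabs1 : IntervalIntegrable (fun x => |x - m₁| * f x) volume 0 m₁ :=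
    If1.continuousOn_mul ((continuous_abs.comp (continuous_id.sub continuous_const)).continuousOn)
  have Iabs2 : IntervalIntegrable (fun x => |x - m₁| * f x) volume m₁ 1 :=
    If2.continuousOn_mul ((continuous_abs.comp (continuous_id.sub continuous_const)).continuousOn)
  have hsplit : ∫ x in (0:ℝ)..1, |x - m₁| * f x
      = (∫ x in (0:ℝ)..m₁, |x - m₁| * f x) + ∫ x in m₁..(1:ℝ), |x - m₁| * f x :=
    (intervalIntegral.integral_add_adjacent_intervals Iabs1 Iabs2).symm
  rw [hsplit, habs1, habs2, hmed1, hFtail, hRHS,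
    hxf 0 m₁ le_rfl hm10.le, hxf m₁ 1 hm10.le zero_le_one, hQ]
  field_simp
  ring
end
end

section
/- Let a > 1 and b > 0, and let m₁ = m_{a−1,b} be the median of Beta(a−1,b) and m₂ = m_{a,b} the median of Beta(a,b). Then ∫_{m₁}^{m₂} f_{a,b}(x) dx = m₁^{a−1} (1−m₁)^{b} / ((a−1) B(a−1,b)). -/
open MeasureTheory intervalIntegral

noncomputable section

lemma betaFun_pos_s14 {a b : ℝ} (ha : 0 < a) (hb : 0 < b) : 0 < betaFun a b := by
  unfold betaFun
  exact div_pos (mul_pos (Real.Gamma_pos_of_pos ha) (Real.Gamma_pos_of_pos hb))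
    (Real.Gamma_pos_of_pos (by linarith))

lemma integrable_kernel {r b m : ℝ} (hr : -1 < r) (hm : 0 ≤ m) (hm1 : m < 1) :
    IntervalIntegrable (fun x => x ^ r * (1 - x) ^ (b - 1)) volume 0 m := by
  apply (intervalIntegrable_rpow' hr).mul_continuousOn
  apply ContinuousOn.rpow_const (by fun_prop)
  intro x hx
  rw [Set.uIcc_of_le hm] at hx
  left
  have := hx.2
  intro h
  nlinarith [hx.2]

/-- For `a > 1`, `b > 0`, with `m₁` the median of `Beta(a−1,b)` and `m₂` the median of
`Beta(a,b)`, `∫_{m₁}^{m₂} f_{a,b}(x) dx = m₁^(a−1) (1−m₁)^b / ((a−1) B(a−1,b))`. -/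
theorem beta_mass_between_medians_formula (a b m₁ m₂ : ℝ) (ha : 1 < a) (hb : 0 < b)
    (h₁ : IsBetaMedian (a - 1) b m₁) (h₂ : IsBetaMedian a b m₂) :
    ∫ x in m₁..m₂, betaPDF a b x =
      m₁ ^ (a - 1) * (1 - m₁) ^ b / ((a - 1) * betaFun (a - 1) b) := by
  obtain ⟨⟨hm₁0, hm₁1⟩, hI₁⟩ := h₁
  obtain ⟨⟨hm₂0, hm₂1⟩, hI₂⟩ := h₂
  have ha1 : (0:ℝ) < a - 1 := by linarith
  have hB : 0 < betaFun a b := betaFun_pos_s14 (by linarith) hb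
  have hB' : 0 < betaFun (a-1) b := betaFun_pos_s14 ha1 hb
  -- relation between the beta values
  have hrel : (a + b - 1) * betaFun a b = (a - 1) * betaFun (a - 1) b := by
    unfold betaFun
    have h1 : Real.Gamma a = (a - 1) * Real.Gamma (a - 1) := by
      rw [← Real.Gamma_add_one (by linarith : a - 1 ≠ 0)]; ring_nf
    have h2 : Real.Gamma (a + b) = (a + b - 1) * Real.Gamma (a + b - 1) := by
      rw [← Real.Gamma_add_one (by intro h; nlinarith : a + b - 1 ≠ 0)]; ring_nf
    have h3 : a - 1 + b = a + b - 1 := by ring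
    rw [h1, h2, h3]
    have hg1 : Real.Gamma (a + b - 1) ≠ 0 :=
      (Real.Gamma_pos_of_pos (by linarith)).ne'
    have hab : a + b - 1 ≠ 0 := by intro h; nlinarith
    field_simp
  -- FTC step
  have key : ∫ x in (0:ℝ)..m₁,
      ((a-1) * (x ^ (a-2) * (1-x) ^ (b-1)) - (a+b-1) * (x ^ (a-1) * (1-x) ^ (b-1)))
      = m₁ ^ (a-1) * (1-m₁) ^ b := by
    have hcont : ContinuousOn (fun x : ℝ => x ^ (a-1) * (1-x) ^ b) (Set.Icc 0 m₁) := by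
      apply ContinuousOn.mul
      · exact (continuousOn_id.rpow_const (fun x _ => Or.inr (by linarith)))
      · exact (by fun_prop : ContinuousOn (fun x : ℝ => 1 - x) _).rpow_const
          (fun x _ => Or.inr (by linarith))
    have hderiv : ∀ x ∈ Set.Ioo (0:ℝ) m₁, HasDerivAt (fun x : ℝ => x ^ (a-1) * (1-x) ^ b)
        ((a-1) * (x ^ (a-2) * (1-x) ^ (b-1)) - (a+b-1) * (x ^ (a-1) * (1-x) ^ (b-1))) x := by
      intro x hx
      have hx0 : x ≠ 0 := hx.1.ne'
      have hx1 : (1:ℝ) - x ≠ 0 := by have := hx.2; intro h; nlinarith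
      have d1 : HasDerivAt (fun x : ℝ => x ^ (a-1)) ((a-1) * x ^ (a-2)) x := by
        have := Real.hasDerivAt_rpow_const (p := a-1) (Or.inl hx0)
        simpa [show a - 1 - 1 = a - 2 by ring] using this
      have d2 : HasDerivAt (fun x : ℝ => (1-x) ^ b) (b * (1-x) ^ (b-1) * (-1)) x := by
        have h0 : HasDerivAt (fun x : ℝ => 1 - x) (-1) x := by
          simpa using (hasDerivAt_id x).const_sub 1
        exact (Real.hasDerivAt_rpow_const (p := b) (Or.inl hx1)).comp x h0
      have := d1.mul d2
      refine HasDerivAt.congr_deriv this ?_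
      have e1 : (1 - x) ^ b = (1 - x) ^ (b - 1) * (1 - x) := by
        rw [← Real.rpow_add_one hx1]; ring_nf
      have e2 : x ^ (a - 1) = x ^ (a - 2) * x := by
        rw [← Real.rpow_add_one hx0]; ring_nf
      rw [e1, e2]; ring
    have hint : IntervalIntegrable
        (fun x => (a-1) * (x ^ (a-2) * (1-x) ^ (b-1)) - (a+b-1) * (x ^ (a-1) * (1-x) ^ (b-1)))
        volume 0 m₁ := by
      exact ((integrable_kernel (by linarith) hm₁0.le hm₁1).const_mul _).sub
        ((integrable_kernel (by linarith) hm₁0.le hm₁1).const_mul _)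
    rw [integral_eq_sub_of_hasDerivAt_of_le hm₁0.le hcont hderiv hint]
    rw [Real.zero_rpow (by linarith : a - 1 ≠ 0)]
    ring
  -- values of the raw integrals from the median hypotheses
  have hI₁' : ∫ x in (0:ℝ)..m₁, x ^ (a-2) * (1-x) ^ (b-1) = betaFun (a-1) b / 2 := by
    have : ∫ x in (0:ℝ)..m₁, x ^ (a-1-1) * (1-x) ^ (b-1) / betaFun (a-1) b = 1/2 := hI₁
    rw [intervalIntegral.integral_div, show a - 1 - 1 = a - 2 by ring] at this
    field_simp at this ⊢
    linarith
  have hI₂' : ∫ x in (0:ℝ)..m₂, x ^ (a-1) * (1-x) ^ (b-1) = betaFun a b / 2 := by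
    have : ∫ x in (0:ℝ)..m₂, x ^ (a-1) * (1-x) ^ (b-1) / betaFun a b = 1/2 := hI₂
    rw [intervalIntegral.integral_div] at this
    field_simp at this ⊢
    linarith
  have hintm₁ : IntervalIntegrable (betaPDF a b) volume 0 m₁ :=
    (integrable_kernel (by linarith) hm₁0.le hm₁1).div_const _
  have hintm₂ : IntervalIntegrable (betaPDF a b) volume 0 m₂ :=
    (integrable_kernel (by linarith) hm₂0.le hm₂1).div_const _
  have hsplit : ∫ x in m₁..m₂, betaPDF a b x =
      (∫ x in (0:ℝ)..m₂, betaPDF a b x) - ∫ x in (0:ℝ)..m₁, betaPDF a b x :=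
    (intervalIntegral.integral_interval_sub_left hintm₂ hintm₁).symm
  -- compute ∫_0^{m₁} betaPDF a b
  have hIm₁ : ∫ x in (0:ℝ)..m₁, betaPDF a b x =
      ((a-1) * (betaFun (a-1) b / 2) - m₁ ^ (a-1) * (1-m₁) ^ b) / ((a+b-1) * betaFun a b) := by
    have hsub : (a-1) * ∫ x in (0:ℝ)..m₁, x ^ (a-2) * (1-x) ^ (b-1) =
        ((a+b-1) * ∫ x in (0:ℝ)..m₁, x ^ (a-1) * (1-x) ^ (b-1)) + m₁ ^ (a-1) * (1-m₁) ^ b := by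
      have := key
      rw [intervalIntegral.integral_sub ((integrable_kernel (by linarith) hm₁0.le hm₁1).const_mul _)
        ((integrable_kernel (by linarith) hm₁0.le hm₁1).const_mul _),
        intervalIntegral.integral_const_mul, intervalIntegral.integral_const_mul] at this
      linarith
    rw [hI₁'] at hsub
    have hIm : ∫ x in (0:ℝ)..m₁, x ^ (a-1) * (1-x) ^ (b-1) =
        ((a-1) * (betaFun (a-1) b / 2) - m₁ ^ (a-1) * (1-m₁) ^ b) / (a+b-1) := by
      have hab1 : a + b - 1 ≠ 0 := by intro h; nlinarith
      field_simp
      linarith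
    unfold betaPDF
    rw [intervalIntegral.integral_div, hIm]
    rw [div_div]
  rw [hsplit, hIm₁, hI₂, hrel]
  have hD : (a - 1) * betaFun (a-1) b ≠ 0 := (mul_pos ha1 hB').ne'
  field_simp
  ring
end
end

section
/- Let a > 3, b > 3 and 0 < δ < 1/2, and let F_{a,b} denote the Beta(a,b) cumulative distribution function extended by F_{a,b}(t) = 1 for t ≥ 1. Then for every x ≥ 0, F_{a,b}((1+δ)x) − F_{a,b}((1−δ)x) ≤ (2δ/(1−δ)) · κ(a,b) · sup_{y ∈ (0,1)} f_{a,b}(y), where κ(a,b) = (a−1)/(a+b−2) + sqrt((a−1)(b−1)/(a+b−3))/(a+b−2) is the second inflexion point of the Beta(a,b) density. -/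
open MeasureTheory intervalIntegral

noncomputable section

lemma continuous_rpow_const' {p : ℝ} (hp : 0 < p) :
    Continuous fun x : ℝ => x ^ p := by
  rw [continuous_iff_continuousAt]
  intro x
  exact Real.continuousAt_rpow_const x p (Or.inr hp.le)

lemma antitoneOn_aux {p q : ℝ} (hp : 0 < p) (hq : 0 < q) :
    AntitoneOn (fun t : ℝ => t ^ p * (1 - t) ^ q) (Set.Icc (p / (p + q)) 1) := by
  have hpq : 0 < p + q := by linarith
  have hc0 : 0 < p / (p + q) := by positivity
  apply (strictAntiOn_of_deriv_neg (convex_Icc _ _) ?_ ?_).antitoneOn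
  · exact ((continuous_rpow_const' hp).mul
      ((continuous_rpow_const' hq).comp (continuous_const.sub continuous_id))).continuousOn
  · intro t ht
    rw [interior_Icc] at ht
    obtain ⟨ht0, ht1⟩ := ht
    have ht0' : 0 < t := lt_trans hc0 ht0
    have ht1' : 0 < 1 - t := by linarith
    have h1 : HasDerivAt (fun t : ℝ => t ^ p) (p * t ^ (p - 1)) t :=
      Real.hasDerivAt_rpow_const (Or.inl ht0'.ne')
    have h2 : HasDerivAt (fun t : ℝ => (1 - t) ^ q) (-1 * q * (1 - t) ^ (q - 1)) t := by
      have := (HasDerivAt.const_sub 1 (hasDerivAt_id t)).rpow_const (p := q) (Or.inl ht1'.ne')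
      simpa using this
    have h := (h1.mul h2).deriv
    rw [show (fun t : ℝ => t ^ p * (1 - t) ^ q) = ((fun t => t ^ p) * fun t => (1 - t) ^ q) from rfl, h]
    have e1 : t ^ p = t ^ (p - 1) * t := by
      rw [← Real.rpow_add_one ht0'.ne' (p - 1)]; ring_nf
    have e2 : (1 - t) ^ q = (1 - t) ^ (q - 1) * (1 - t) := by
      rw [← Real.rpow_add_one ht1'.ne' (q - 1)]; ring_nf
    have hA : (0:ℝ) < t ^ (p - 1) := Real.rpow_pos_of_pos ht0' _
    have hB : (0:ℝ) < (1 - t) ^ (q - 1) := Real.rpow_pos_of_pos ht1' _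
    have hkey : p * (1 - t) - q * t < 0 := by
      have := (div_lt_iff₀ hpq).mp ht0
      nlinarith
    rw [e1, e2]
    nlinarith [mul_pos hA hB, hkey]

set_option maxHeartbeats 2000000 in
/-- For `a, b > 3`, `0 < δ < 1/2` and `x ≥ 0`, with `F_{a,b}` the `Beta(a,b)` cdf (extended by
`1` beyond `1`), `F_{a,b}((1+δ)x) − F_{a,b}((1−δ)x) ≤ (2δ/(1−δ)) κ(a,b) sup_{(0,1)} f_{a,b}`,
where `κ(a,b) = (a−1)/(a+b−2) + √((a−1)(b−1)/(a+b−3))/(a+b−2)` is the second inflexion point of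
the `Beta(a,b)` density. -/
theorem beta_cdf_increment_bound (a b δ : ℝ) (ha : 3 < a) (hb : 3 < b)
    (hδ0 : 0 < δ) (hδ : δ < 1/2) (x : ℝ) (hx : 0 ≤ x) :
    (∫ u in (0:ℝ)..min ((1 + δ) * x) 1, betaPDF a b u) -
        (∫ u in (0:ℝ)..min ((1 - δ) * x) 1, betaPDF a b u) ≤
      2 * δ / (1 - δ) *
        ((a - 1) / (a + b - 2) + Real.sqrt ((a - 1) * (b - 1) / (a + b - 3)) / (a + b - 2)) *
        ⨆ y : Set.Ioo (0:ℝ) 1, betaPDF a b y := by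
  have ha1 : (0:ℝ) < a - 1 := by linarith
  have hb1 : (0:ℝ) < b - 1 := by linarith
  have hab1 : (0:ℝ) < a + b - 1 := by linarith
  have hab2 : (0:ℝ) < a + b - 2 := by linarith
  have hab3 : (0:ℝ) < a + b - 3 := by linarith
  have hδ1 : (0:ℝ) < 1 - δ := by linarith
  have hB : 0 < betaFun a b := by
    have h1 : 0 < Real.Gamma a := Real.Gamma_pos_of_pos (by linarith)
    have h2 : 0 < Real.Gamma b := Real.Gamma_pos_of_pos (by linarith)
    have h3 : 0 < Real.Gamma (a + b) := Real.Gamma_pos_of_pos (by linarith)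
    unfold betaFun; positivity
  set M := ⨆ y : Set.Ioo (0:ℝ) 1, betaPDF a b y with hMdef
  -- sup bounds
  have hbdd : BddAbove (Set.range fun y : Set.Ioo (0:ℝ) 1 => betaPDF a b y) := by
    refine ⟨1 / betaFun a b, ?_⟩
    rintro z ⟨⟨y, hy0, hy1⟩, rfl⟩
    show betaPDF a b y ≤ 1 / betaFun a b
    unfold betaPDF
    rw [div_le_div_iff_of_pos_right hB]
    exact mul_le_one₀ (Real.rpow_le_one hy0.le hy1.le ha1.le)
      (Real.rpow_nonneg (by linarith) _)
      (Real.rpow_le_one (by linarith) (by linarith) hb1.le)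
  have hfle : ∀ y ∈ Set.Ioo (0:ℝ) 1, betaPDF a b y ≤ M := fun y hy =>
    le_ciSup hbdd ⟨y, hy⟩
  have hf0 : ∀ y : ℝ, 0 ≤ y → y ≤ 1 → 0 ≤ betaPDF a b y := by
    intro y h0 h1
    unfold betaPDF
    have := Real.rpow_nonneg h0 (a - 1)
    have := Real.rpow_nonneg (by linarith : (0:ℝ) ≤ 1 - y) (b - 1)
    positivity
  have hM0 : 0 ≤ M :=
    le_trans (hf0 (1/2) (by norm_num) (by norm_num))
      (hfle (1/2) ⟨by norm_num, by norm_num⟩)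
  have hfM : ∀ y ∈ Set.Icc (0:ℝ) 1, betaPDF a b y ≤ M := by
    rintro y ⟨hy0, hy1⟩
    rcases eq_or_lt_of_le hy0 with h | h
    · have : betaPDF a b y = 0 := by
        unfold betaPDF; rw [← h, Real.zero_rpow ha1.ne']; simp
      rw [this]; exact hM0
    rcases eq_or_lt_of_le hy1 with h1 | h1
    · have : betaPDF a b y = 0 := by
        unfold betaPDF; rw [h1]; simp [Real.zero_rpow hb1.ne']
      rw [this]; exact hM0
    · exact hfle y ⟨h, h1⟩
  -- continuity / integrability
  have hcont : Continuous (betaPDF a b) := by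
    unfold betaPDF
    exact ((continuous_rpow_const' ha1).mul
      ((continuous_rpow_const' hb1).comp (continuous_const.sub continuous_id))).div_const _
  have hint : ∀ r s : ℝ, IntervalIntegrable (betaPDF a b) volume r s := fun r s =>
    hcont.intervalIntegrable r s
  -- kappa
  set s := Real.sqrt ((a - 1) * (b - 1) / (a + b - 3)) with hsdef
  set κ := (a - 1) / (a + b - 2) + s / (a + b - 2) with hκdef
  have hs0 : 0 ≤ s := Real.sqrt_nonneg _
  have hκ0 : 0 < κ := by
    have := div_pos ha1 hab2
    have := div_nonneg hs0 hab2.le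
    rw [hκdef]; linarith
  have hsq : (b - 1) / (a + b - 1) ≤ s := by
    rw [hsdef]
    rw [show (b-1)/(a+b-1) = Real.sqrt (((b-1)/(a+b-1))^2) from
      (Real.sqrt_sq (by positivity)).symm]
    apply Real.sqrt_le_sqrt
    rw [div_pow, div_le_div_iff₀ (by positivity) hab3]
    have k1 : (b-1)*(a+b-3) ≤ (a-1)*(a+b-1)^2 := by
      nlinarith [mul_pos hab1 hab1, mul_pos hb1 hab1, mul_pos hab1 hab3]
    nlinarith [mul_le_mul_of_nonneg_left k1 hb1.le]
  have hmκ : a / (a + b - 1) ≤ κ := by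
    have hsq' : b - 1 ≤ s * (a + b - 1) := by
      rw [div_le_iff₀ hab1] at hsq; linarith
    calc a / (a + b - 1) ≤ ((a - 1) + s) / (a + b - 2) := by
          rw [div_le_div_iff₀ hab1 hab2]; nlinarith
      _ = κ := by rw [hκdef, add_div]
  have hmode : (a - 1) / (a + b - 2) ≤ a / (a + b - 1) := by
    rw [div_le_div_iff₀ hab2 hab1]; nlinarith
  have hanti_f : AntitoneOn (fun t : ℝ => t ^ (a - 1) * (1 - t) ^ (b - 1))
      (Set.Icc ((a - 1) / (a + b - 2)) 1) := by
    have h := antitoneOn_aux ha1 hb1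
    rw [show a - 1 + (b - 1) = a + b - 2 from by ring] at h
    exact h
  have hanti_g : AntitoneOn (fun t : ℝ => t ^ a * (1 - t) ^ (b - 1))
      (Set.Icc (a / (a + b - 1)) 1) := by
    have h := antitoneOn_aux (show (0:ℝ) < a by linarith) hb1
    rw [show a + (b - 1) = a + b - 1 from by ring] at h
    exact h
  -- setup interval
  set u := min ((1 - δ) * x) 1 with hudef
  set v := min ((1 + δ) * x) 1 with hvdef
  have hxle : (1 - δ) * x ≤ (1 + δ) * x := by nlinarith
  have huv : u ≤ v := min_le_min hxle le_rfl
  have hu0 : 0 ≤ u := le_min (mul_nonneg hδ1.le hx) (by norm_num)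
  have hv1 : v ≤ 1 := min_le_right _ _
  have hvle : v ≤ (1 + δ) * x := min_le_left _ _
  rw [intervalIntegral.integral_interval_sub_left (hint 0 v) (hint 0 u)]
  rcases le_or_gt ((1 - δ) * x) κ with hcase | hcase
  · -- small x case
    have hvu : v - u ≤ 2 * δ / (1 - δ) * κ := by
      have h1 : v - u ≤ 2 * δ * x := by
        rcases le_total ((1 - δ) * x) 1 with h | h
        · have : u = (1 - δ) * x := min_eq_left h
          rw [this]; nlinarith
        · have : u = 1 := min_eq_right h
          rw [this]; nlinarith
      have h2 : 2 * δ * x ≤ 2 * δ / (1 - δ) * κ := by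
        rw [div_mul_eq_mul_div, le_div_iff₀ hδ1]
        nlinarith
      linarith
    calc (∫ y in u..v, betaPDF a b y) ≤ ∫ _ in u..v, M := by
          apply intervalIntegral.integral_mono_on huv (hint u v) intervalIntegrable_const
          intro y hy
          exact hfM y ⟨le_trans hu0 hy.1, le_trans hy.2 hv1⟩
      _ = (v - u) * M := by rw [intervalIntegral.integral_const, smul_eq_mul]
      _ ≤ 2 * δ / (1 - δ) * κ * M := mul_le_mul_of_nonneg_right hvu hM0
  · rcases le_or_gt 1 ((1 - δ) * x) with hone | hone
    · have hu : u = 1 := min_eq_right hone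
      have hv : v = 1 := min_eq_right (le_trans hone hxle)
      rw [hu, hv, intervalIntegral.integral_same]
      have : 0 ≤ 2 * δ / (1 - δ) := by positivity
      exact mul_nonneg (mul_nonneg this hκ0.le) hM0
    · have hu : u = (1 - δ) * x := min_eq_left hone.le
      have hκu : κ ≤ u := by rw [hu]; exact hcase.le
      have hu1' : u < 1 := by rw [hu]; exact hone
      have hκ1 : κ < 1 := lt_of_le_of_lt hκu hu1'
      have hu0' : 0 < u := lt_of_lt_of_le hκ0 hκu
      have step1 : (∫ y in u..v, betaPDF a b y) ≤ (v - u) * betaPDF a b u := by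
        calc (∫ y in u..v, betaPDF a b y) ≤ ∫ _ in u..v, betaPDF a b u := by
              apply intervalIntegral.integral_mono_on huv (hint u v) intervalIntegrable_const
              intro y hy
              unfold betaPDF
              rw [div_le_div_iff_of_pos_right hB]
              exact hanti_f ⟨le_trans hmode (le_trans hmκ hκu), hu1'.le⟩
                ⟨le_trans (le_trans hmode (le_trans hmκ hκu)) hy.1, le_trans hy.2 hv1⟩ hy.1
          _ = (v - u) * betaPDF a b u := by rw [intervalIntegral.integral_const, smul_eq_mul]
      have step2 : (v - u) * betaPDF a b u ≤ 2 * δ * x * betaPDF a b u := by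
        apply mul_le_mul_of_nonneg_right _ (hf0 u hu0 hu1'.le)
        have h2δ : u = (1 - δ) * x := hu
        nlinarith [hvle, h2δ]
      have step3 : 2 * δ * x * betaPDF a b u = 2 * δ / (1 - δ) * (u * betaPDF a b u) := by
        rw [hu]; field_simp
      have hgu : u * betaPDF a b u = u ^ a * (1 - u) ^ (b - 1) / betaFun a b := by
        unfold betaPDF
        rw [show u ^ a = u ^ (a - 1) * u from by rw [← Real.rpow_add_one hu0'.ne']; ring_nf]
        ring
      have hgκ : κ * betaPDF a b κ = κ ^ a * (1 - κ) ^ (b - 1) / betaFun a b := by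
        unfold betaPDF
        rw [show κ ^ a = κ ^ (a - 1) * κ from by rw [← Real.rpow_add_one hκ0.ne']; ring_nf]
        ring
      have step4 : u * betaPDF a b u ≤ κ * betaPDF a b κ := by
        rw [hgu, hgκ, div_le_div_iff_of_pos_right hB]
        exact hanti_g ⟨hmκ, hκ1.le⟩ ⟨le_trans hmκ hκu, hu1'.le⟩ hκu
      have step5 : κ * betaPDF a b κ ≤ κ * M :=
        mul_le_mul_of_nonneg_left (hfle κ ⟨hκ0, hκ1⟩) hκ0.le
      calc (∫ y in u..v, betaPDF a b y) ≤ (v - u) * betaPDF a b u := step1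
        _ ≤ 2 * δ * x * betaPDF a b u := step2
        _ = 2 * δ / (1 - δ) * (u * betaPDF a b u) := step3
        _ ≤ 2 * δ / (1 - δ) * (κ * M) := by
            apply mul_le_mul_of_nonneg_left (le_trans step4 step5) (by positivity)
        _ = 2 * δ / (1 - δ) * κ * M := by ring
end
end

section
/- Stirling-type bounds for the Beta function: (i) there exists a constant C > 0 such that for all reals a, b > 1, B(a,b) ≤ C · a^{a−1/2} b^{b−1/2} / (a+b)^{a+b−1/2}; (ii) there exists n₀ such that for all reals a, b > n₀, B(a,b) ≥ a^{a−1/2} b^{b−1/2} / (a+b)^{a+b−1/2}. -/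
open MeasureTheory intervalIntegral

noncomputable section

namespace StirlingAux

open Real Filter Stirling

noncomputable def stirPhi (y : ℝ) : ℝ := (y - 1/2) * Real.log y - y
noncomputable def stirF (y : ℝ) : ℝ := Real.log (Real.Gamma y) - stirPhi y

lemma wendel {x s : ℝ} (hx : 0 < x) (hs : 0 ≤ s) (hs1 : s ≤ 1) :
    Real.log (Real.Gamma (x + s)) ≤ Real.log (Real.Gamma x) + s * Real.log x := by
  have h := Real.convexOn_log_Gamma.2 (Set.mem_Ioi.2 hx)
    (Set.mem_Ioi.2 (by linarith : (0:ℝ) < x + 1)) (by linarith : (0:ℝ) ≤ 1 - s) hs (by ring)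
  simp only [smul_eq_mul, Function.comp_apply] at h
  have hxy : (1 - s) * x + s * (x + 1) = x + s := by ring
  rw [hxy] at h
  have hG1 : Real.Gamma (x + 1) = x * Real.Gamma x := Real.Gamma_add_one hx.ne'
  have hGpos := Real.Gamma_pos_of_pos hx
  rw [hG1, Real.log_mul hx.ne' hGpos.ne'] at h
  nlinarith [h]

lemma phi_up {n y : ℝ} (hn : 1 ≤ n) (hny : n ≤ y) (hyn : y ≤ n + 1) :
    stirPhi n + (y - n) * Real.log n - stirPhi y ≤ 1 / n := by
  have hn0 : 0 < n := by linarith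
  have hy0 : 0 < y := by linarith
  have hlog : Real.log n - Real.log y ≤ -((y - n) / y) := by
    have h := Real.log_le_sub_one_of_pos (show 0 < n / y by positivity)
    rw [Real.log_div hn0.ne' hy0.ne'] at h
    have h2 : n / y - 1 = -((y - n) / y) := by field_simp; ring
    linarith [h2 ▸ h]
  have key : stirPhi n + (y - n) * Real.log n - stirPhi y
      = (y - 1/2) * (Real.log n - Real.log y) + (y - n) := by
    unfold stirPhi; ring
  rw [key]
  have h1 : (y - 1/2) * (Real.log n - Real.log y) ≤ (y - 1/2) * (-((y - n) / y)) :=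
    mul_le_mul_of_nonneg_left hlog (by linarith)
  have h2 : (y - 1/2) * (-((y - n) / y)) + (y - n) = (y - n) / (2 * y) := by field_simp; ring
  have h3 : (y - n) / (2 * y) ≤ 1 / n := by
    rw [div_le_div_iff₀ (by linarith) hn0]
    nlinarith
  linarith

lemma phi_down {n y : ℝ} (hn : 1 ≤ n) (hny : n ≤ y) (hyn : y ≤ n + 1) :
    -(1 / n) ≤ stirPhi (n + 1) - (n + 1 - y) * Real.log y - stirPhi y := by
  have hn0 : 0 < n := by linarith
  have hy0 : 0 < y := by linarith
  have hlog : Real.log y - Real.log (n + 1) ≤ -((n + 1 - y) / (n + 1)) := by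
    have h := Real.log_le_sub_one_of_pos (show 0 < y / (n + 1) by positivity)
    rw [Real.log_div hy0.ne' (by linarith : n + (1:ℝ) ≠ 0)] at h
    have h2 : y / (n + 1) - 1 = -((n + 1 - y) / (n + 1)) := by field_simp; ring
    linarith [h2 ▸ h]
  have key : stirPhi (n + 1) - (n + 1 - y) * Real.log y - stirPhi y
      = (n + 1/2) * (Real.log (n + 1) - Real.log y) - (n + 1 - y) := by
    unfold stirPhi; ring
  rw [key]
  have h1 : (n + 1/2) * ((n + 1 - y) / (n + 1)) ≤ (n + 1/2) * (Real.log (n + 1) - Real.log y) :=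
    mul_le_mul_of_nonneg_left (by linarith) (by linarith)
  have h2 : (n + 1/2) * ((n + 1 - y) / (n + 1)) - (n + 1 - y) = -((n + 1 - y) / (2 * (n + 1))) := by
    field_simp; ring
  have h3 : (n + 1 - y) / (2 * (n + 1)) ≤ 1 / n := by
    rw [div_le_div_iff₀ (by linarith) hn0]
    nlinarith
  linarith

lemma bridge_up {n y : ℝ} (hn : 1 ≤ n) (hny : n ≤ y) (hyn : y ≤ n + 1) :
    stirF y ≤ stirF n + 1 / n := by
  have hw := wendel (show 0 < n by linarith) (show 0 ≤ y - n by linarith)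
    (show y - n ≤ 1 by linarith)
  rw [show n + (y - n) = y by ring] at hw
  have := phi_up hn hny hyn
  unfold stirF; linarith

lemma bridge_down {n y : ℝ} (hn : 1 ≤ n) (hny : n ≤ y) (hyn : y ≤ n + 1) :
    stirF (n + 1) - 1 / n ≤ stirF y := by
  have hy0 : 0 < y := by linarith
  have hw := wendel hy0 (show 0 ≤ n + 1 - y by linarith) (show n + 1 - y ≤ 1 by linarith)
  rw [show y + (n + 1 - y) = n + 1 by ring] at hw
  have := phi_down hn hny hyn
  unfold stirF; linarith

noncomputable def stirL : ℝ := Real.log (Real.sqrt Real.pi) + (1/2) * Real.log 2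

lemma stirL_pos : 0 < stirL := by
  have h1 : (1:ℝ) < Real.sqrt Real.pi := by
    rw [show (1:ℝ) = Real.sqrt 1 by simp]
    exact Real.sqrt_lt_sqrt (by norm_num) (by linarith [Real.pi_gt_three])
  have := Real.log_pos h1
  have := Real.log_pos (by norm_num : (1:ℝ) < 2)
  unfold stirL; linarith

lemma stirF_seq_eq (n : ℕ) (hn : 1 ≤ n) :
    stirF ((n:ℝ) + 1) = Real.log (stirlingSeq n) + (1/2) * Real.log 2 + 1
      - ((n:ℝ) * Real.log (1 + 1/n) + (1/2) * Real.log (1 + 1/n)) := by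
  have hn0 : (0:ℝ) < n := by exact_mod_cast hn
  have hfac : (0:ℝ) < (n.factorial : ℝ) := by exact_mod_cast Nat.factorial_pos n
  have hG : Real.Gamma ((n:ℝ) + 1) = (n.factorial : ℝ) := Real.Gamma_nat_eq_factorial n
  have hss : Real.log (stirlingSeq n)
      = Real.log (n.factorial : ℝ) - ((1/2) * (Real.log 2 + Real.log n) + n * (Real.log n - 1)) := by
    unfold stirlingSeq
    rw [Real.log_div hfac.ne' (by positivity), Real.log_mul (by positivity) (by positivity),
      Real.log_sqrt (by positivity), Real.log_pow, Real.log_mul (by norm_num) hn0.ne',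
      Real.log_div hn0.ne' (Real.exp_pos 1).ne', Real.log_exp]
    push_cast
    ring
  have hlog1 : Real.log (1 + 1/n) = Real.log ((n:ℝ) + 1) - Real.log n := by
    rw [show (1:ℝ) + 1/n = ((n:ℝ)+1)/n by field_simp, Real.log_div (by linarith) hn0.ne']
  unfold stirF stirPhi
  rw [hG, hss, hlog1]
  ring

lemma tendsto_stirF_seq : Filter.Tendsto (fun n : ℕ => stirF n) atTop (nhds stirL) := by
  have h1 : Filter.Tendsto (fun n : ℕ => Real.log (stirlingSeq n)) atTop
      (nhds (Real.log (Real.sqrt Real.pi))) :=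
    tendsto_stirlingSeq_sqrt_pi.log (by positivity)
  have h2 : Filter.Tendsto (fun n : ℕ => (1:ℝ) + 1/n) atTop (nhds 1) := by
    have := tendsto_one_div_atTop_nhds_zero_nat (𝕜 := ℝ)
    simpa using tendsto_const_nhds.add this
  have h3 : Filter.Tendsto (fun n : ℕ => Real.log (1 + 1/(n:ℝ))) atTop (nhds 0) := by
    simpa using h2.log one_ne_zero
  have h4 : Filter.Tendsto (fun n : ℕ => (n:ℝ) * Real.log (1 + 1/n)) atTop (nhds 1) := by
    have hpow := Real.tendsto_one_add_div_pow_exp 1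
    have h := hpow.log (Real.exp_pos 1).ne'
    simp only [Real.log_exp] at h
    refine h.congr' ?_
    filter_upwards [eventually_ge_atTop 1] with n hn
    rw [Real.log_pow]
  have hmain : Filter.Tendsto (fun n : ℕ => stirF ((n:ℝ) + 1)) atTop (nhds stirL) := by
    have h : Filter.Tendsto (fun n : ℕ => Real.log (stirlingSeq n) + (1/2) * Real.log 2 + 1
        - ((n:ℝ) * Real.log (1 + 1/n) + (1/2) * Real.log (1 + 1/n))) atTop
        (nhds (Real.log (Real.sqrt Real.pi) + (1/2) * Real.log 2 + 1 - (1 + (1/2) * 0))) :=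
      ((h1.add_const _).add_const _).sub (h4.add (h3.const_mul _))
    have heq : stirL = Real.log (Real.sqrt Real.pi) + (1/2) * Real.log 2 + 1 - (1 + (1/2) * 0) := by
      unfold stirL; ring
    rw [heq]
    refine h.congr' ?_
    filter_upwards [eventually_ge_atTop 1] with n hn
    exact (stirF_seq_eq n hn).symm
  have h : Filter.Tendsto (fun n : ℕ => stirF ((n+1 : ℕ):ℝ)) atTop (nhds stirL) :=
    hmain.congr fun n => by push_cast; ring_nf
  exact (tendsto_add_atTop_iff_nat 1).mp h

lemma exists_tail : ∃ N : ℕ, 1 ≤ N ∧ ∀ y : ℝ, (N:ℝ) ≤ y →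
    stirL - stirL/3 ≤ stirF y ∧ stirF y ≤ stirL + stirL/3 := by
  have hL := stirL_pos
  have hev1 : ∀ᶠ n : ℕ in atTop, |stirF n - stirL| < stirL/6 := by
    have := Metric.tendsto_atTop.mp tendsto_stirF_seq (stirL/6) (by linarith)
    obtain ⟨N, hN⟩ := this
    filter_upwards [eventually_ge_atTop N] with n hn
    simpa [Real.dist_eq] using hN n hn
  have hev2 : ∀ᶠ n : ℕ in atTop, (1:ℝ)/n < stirL/6 :=
    tendsto_one_div_atTop_nhds_zero_nat.eventually (gt_mem_nhds (by linarith))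
  obtain ⟨N, hN⟩ := (hev1.and (hev2.and (eventually_ge_atTop 1))).exists_forall_of_atTop
  refine ⟨N, (hN N le_rfl).2.2, fun y hy => ?_⟩
  have hN1 : (1:ℕ) ≤ N := (hN N le_rfl).2.2
  have hy1 : (1:ℝ) ≤ y := le_trans (by exact_mod_cast hN1) hy
  set n := ⌊y⌋₊ with hn
  have hnN : N ≤ n := Nat.le_floor hy
  have hn1 : (1:ℝ) ≤ (n:ℝ) := by exact_mod_cast le_trans hN1 hnN
  have hny : (n:ℝ) ≤ y := Nat.floor_le (by linarith)
  have hyn : y ≤ (n:ℝ) + 1 := (Nat.lt_floor_add_one y).le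
  obtain ⟨ha1, ha2, -⟩ := hN n hnN
  obtain ⟨hb1, -, -⟩ := hN (n+1) (le_trans hnN (Nat.le_succ n))
  rw [abs_lt] at ha1 hb1
  push_cast at hb1
  constructor
  · have := bridge_down hn1 hny hyn
    linarith [hb1.1, ha2]
  · have := bridge_up hn1 hny hyn
    linarith [ha1.2, ha2]

lemma target_eq {a b : ℝ} (ha : 0 < a) (hb : 0 < b) :
    a ^ (a - 1/2) * b ^ (b - 1/2) / (a + b) ^ (a + b - 1/2)
      = Real.exp (stirPhi a + stirPhi b - stirPhi (a + b)) := by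
  rw [Real.rpow_def_of_pos ha, Real.rpow_def_of_pos hb, Real.rpow_def_of_pos (by linarith),
    ← Real.exp_add, ← Real.exp_sub]
  unfold stirPhi
  congr 1
  ring

lemma beta_eq {a b : ℝ} (ha : 0 < a) (hb : 0 < b) :
    betaFun a b = Real.exp (stirF a + stirF b - stirF (a + b))
      * Real.exp (stirPhi a + stirPhi b - stirPhi (a + b)) := by
  have hGa := Real.Gamma_pos_of_pos ha
  have hGb := Real.Gamma_pos_of_pos hb
  have hGab := Real.Gamma_pos_of_pos (show (0:ℝ) < a + b by linarith)
  rw [← Real.exp_add]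
  have h : (stirF a + stirF b - stirF (a + b)) + (stirPhi a + stirPhi b - stirPhi (a + b))
      = Real.log (Real.Gamma a) + Real.log (Real.Gamma b) - Real.log (Real.Gamma (a + b)) := by
    unfold stirF; ring
  rw [h, Real.exp_sub, Real.exp_add, Real.exp_log hGa, Real.exp_log hGb, Real.exp_log hGab]
  rfl

lemma continuousOn_stirF {T : ℝ} : ContinuousOn stirF (Set.Icc 1 T) := by
  intro y hy
  have hy0 : 0 < y := lt_of_lt_of_le one_pos hy.1
  have hg : ContinuousAt Real.Gamma y := by
    refine (Real.differentiableAt_Gamma ?_).continuousAt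
    intro m
    have : (0:ℝ) ≤ m := Nat.cast_nonneg m
    intro h
    rw [h] at hy0
    linarith
  have hGpos := Real.Gamma_pos_of_pos hy0
  have h1 : ContinuousAt (fun y => Real.log (Real.Gamma y)) y :=
    (Real.continuousAt_log hGpos.ne').comp hg
  have h2 : ContinuousAt (fun y : ℝ => (y - 1/2) * Real.log y - y) y := by
    exact ((continuousAt_id.sub continuousAt_const).mul
      (Real.continuousAt_log hy0.ne')).sub continuousAt_id
  exact (h1.sub h2).continuousWithinAt

end StirlingAux

open StirlingAux in
/-- Stirling-type bounds for the Beta function: (i) there is `C > 0` with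
`B(a,b) ≤ C a^(a−1/2) b^(b−1/2) / (a+b)^(a+b−1/2)` for all `a, b > 1`; (ii) there is `n₀` such
that `B(a,b) ≥ a^(a−1/2) b^(b−1/2) / (a+b)^(a+b−1/2)` for all `a, b > n₀`. -/
theorem betaFun_stirling_bounds :
    (∃ C : ℝ, 0 < C ∧ ∀ a b : ℝ, 1 < a → 1 < b →
      betaFun a b ≤
        C * a ^ (a - 1/2) * b ^ (b - 1/2) / (a + b) ^ (a + b - 1/2)) ∧
    (∃ n₀ : ℝ, ∀ a b : ℝ, n₀ < a → n₀ < b →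
      a ^ (a - 1/2) * b ^ (b - 1/2) / (a + b) ^ (a + b - 1/2) ≤ betaFun a b) := by
  obtain ⟨N, hN1, htail⟩ := exists_tail
  have hN1R : (1:ℝ) ≤ (N:ℝ) := by exact_mod_cast hN1
  constructor
  · -- part (i)
    obtain ⟨p, hp, hmin⟩ := isCompact_Icc.exists_isMinOn (f := stirF)
      (Set.nonempty_Icc.2 hN1R) continuousOn_stirF
    obtain ⟨q, hq, hmax⟩ := isCompact_Icc.exists_isMaxOn (f := stirF)
      (Set.nonempty_Icc.2 hN1R) continuousOn_stirF
    set d1 := min (stirF p) (stirL - stirL/3) with hd1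
    set d2 := max (stirF q) (stirL + stirL/3) with hd2
    have hglob : ∀ y : ℝ, 1 ≤ y → d1 ≤ stirF y ∧ stirF y ≤ d2 := by
      intro y hy
      rcases le_total y (N:ℝ) with hle | hge
      · have hmem : y ∈ Set.Icc (1:ℝ) (N:ℝ) := ⟨hy, hle⟩
        exact ⟨le_trans (min_le_left _ _) (hmin hmem),
          le_trans (hmax hmem) (le_max_left _ _)⟩
      · obtain ⟨hl, hu⟩ := htail y hge
        exact ⟨le_trans (min_le_right _ _) hl, le_trans hu (le_max_right _ _)⟩
    refine ⟨Real.exp (2*d2 - d1), Real.exp_pos _, fun a b ha hb => ?_⟩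
    have ha0 : (0:ℝ) < a := by linarith
    have hb0 : (0:ℝ) < b := by linarith
    have hga := hglob a ha.le
    have hgb := hglob b hb.le
    have hgab := hglob (a+b) (by linarith)
    rw [mul_assoc, mul_div_assoc, target_eq ha0 hb0, beta_eq ha0 hb0]
    refine mul_le_mul_of_nonneg_right ?_ (Real.exp_pos _).le
    rw [Real.exp_le_exp]
    linarith [hga.2, hgb.2, hgab.1]
  · -- part (ii)
    refine ⟨(N:ℝ), fun a b ha hb => ?_⟩
    have ha0 : (0:ℝ) < a := by linarith
    have hb0 : (0:ℝ) < b := by linarith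
    have hga := htail a ha.le
    have hgb := htail b hb.le
    have hgab := htail (a+b) (by linarith)
    rw [target_eq ha0 hb0, beta_eq ha0 hb0]
    have h1 : (1:ℝ) ≤ Real.exp (stirF a + stirF b - stirF (a+b)) := by
      rw [show (1:ℝ) = Real.exp 0 by simp, Real.exp_le_exp]
      linarith [hga.1, hgb.1, hgab.2]
    nlinarith [Real.exp_pos (stirPhi a + stirPhi b - stirPhi (a+b)), h1]
end
end
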